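/- Let D ≥ 1, and for each pair of bits b, g ∈ F₂ let ρ_b^g be a density matrix on ℂ^D and P̃_b^g a D×D complex matrix, satisfying for all a, b ∈ F₂: P̃_b^0 + P̃_b^1 = 1, P̃_b^a ρ_{b̄}^0 P̃_b^a = P̃_b^a ρ_{b̄}^1 P̃_b^a, and P̃_b^a ρ_{b̄}^0 P̃_b^{ā} = − P̃_b^a ρ_{b̄}^1 P̃_b^{ā} (where x̄ = 1 ⊕ x). Fix b ∈ F₂ⁿ, let C₀ ⊆ F₂ⁿ be a linear subspace, and set ρ_{C₀} = |C₀|⁻¹ Σ_{g ∈ C₀} ⊗_{k=1}^n ρ_{b̄[k]}^{g[k]}. Then for all k, l ∈ F₂ⁿ: if k ⊕ l lies in the dual code C₀^⊥ = {w ∈ F₂ⁿ : w·g = 0 for all g ∈ C₀} then (⊗_{i=1}^n P̃_{b[i]}^{k[i]}) · ρ_{C₀} · (⊗_{i=1}^n P̃_{b[i]}^{l[i]}) = (⊗_{i=1}^n P̃_{b[i]}^{k[i]}) · (⊗_{k=1}^n ρ_{b̄[k]}^{0}) · (⊗_{i=1}^n P̃_{b[i]}^{l[i]}), and otherwise (⊗_{i=1}^n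 P̃_{b[i]}^{k[i]}) · ρ_{C₀} · (⊗_{i=1}^n P̃_{b[i]}^{l[i]}) = 0. -/

import Mathlib

open Matrix
open scoped ComplexOrder Classical

/-- The `n`-fold Kronecker/tensor product `⊗_{i=1}^n M_i`, as a matrix acting on
`(ℂ^D)^{⊗n}` (indexed by functions `Fin n → Fin D`). -/
noncomputable def tpow {D n : ℕ} (M : Fin n → Matrix (Fin D) (Fin D) ℂ) :
    Matrix (Fin n → Fin D) (Fin n → Fin D) ℂ :=
  Matrix.of fun x y => ∏ i, M i (x i) (y i)

/-- `ρ_A = |A|⁻¹ Σ_{g ∈ A} ⊗_{k=1}^n ρ_{b̄[k]}^{g[k]}`. -/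
noncomputable def rhoOf {D n : ℕ} (ρ : ZMod 2 → ZMod 2 → Matrix (Fin D) (Fin D) ℂ)
    (b : Fin n → ZMod 2) (A : Finset (Fin n → ZMod 2)) :
    Matrix (Fin n → Fin D) (Fin n → Fin D) ℂ :=
  ((A.card : ℂ))⁻¹ • ∑ g ∈ A, tpow (fun k => ρ (b k + 1) (g k))


/-!
Sitewise, the two relations say that
`P̃_β^a ρ_β̄^g P̃_β^c = (-1)^((a + c) g) P̃_β^a ρ_β̄^0 P̃_β^c`, so sandwiching the product
state of a codeword `g` multiplies the one of `g = 0` by `(-1)^((k ⊕ l)·g)`. Averaging over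
`C₀` leaves the mean of the character `g ↦ (-1)^((k ⊕ l)·g)` of `C₀`, which is `1` when the
character is trivial, i.e. `k ⊕ l ∈ C₀^⊥`, and `0` otherwise.
-/

open Finset

lemma AddChar.map_sum_eq_prod {ι A M : Type*} [AddCommMonoid A] [CommMonoid M]
    (ψ : AddChar A M) (s : Finset ι) (f : ι → A) :
    ψ (∑ i ∈ s, f i) = ∏ i ∈ s, ψ (f i) := by
  induction s using Finset.cons_induction with
  | empty => simp
  | cons a s ha ih => rw [sum_cons, prod_cons, AddChar.map_add_eq_mul, ih]

noncomputable def signChar : AddChar (ZMod 2) ℂ :=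
  AddChar.zmodChar 2 (by norm_num : (-1 : ℂ) ^ 2 = 1)

lemma signChar_one : signChar 1 = -1 := by
  simp [signChar, AddChar.zmodChar_apply, ZMod.val_one]

lemma zmodTwo_eq_zero_or_eq_one (x : ZMod 2) : x = 0 ∨ x = 1 := by
  revert x; decide

lemma signChar_eq_one_iff (x : ZMod 2) : signChar x = 1 ↔ x = 0 := by
  rcases zmodTwo_eq_zero_or_eq_one x with rfl | rfl
  · simp
  · norm_num [signChar_one]

lemma sum_signChar_dotProduct {n : ℕ} (C : Submodule (ZMod 2) (Fin n → ZMod 2))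
    (w : Fin n → ZMod 2) :
    ∑ g ∈ univ.filter (· ∈ C), signChar (w ⬝ᵥ g) =
      if ∀ g ∈ C, w ⬝ᵥ g = 0 then (#(univ.filter (· ∈ C)) : ℂ) else 0 := by
  let ψ : AddChar C ℂ := signChar.compAddMonoidHom
    ((LinearMap.toAddMonoidHom (dotProductBilin (ZMod 2) (ZMod 2) w)).comp C.subtype.toAddMonoidHom)
  have hψ : ψ = 0 ↔ ∀ g ∈ C, w ⬝ᵥ g = 0 := by
    simp [ψ, AddChar.eq_zero_iff, signChar_eq_one_iff]
  rw [sum_subtype _ (fun _ => by rw [mem_filter_univ]) (fun g => signChar (w ⬝ᵥ g)),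
    ← Fintype.card_subtype]
  exact (AddChar.sum_eq_ite ψ).trans (by simp only [hψ])

lemma tpow_mul {D n : ℕ} (A B : Fin n → Matrix (Fin D) (Fin D) ℂ) :
    tpow A * tpow B = tpow (fun i => A i * B i) := by
  ext x y
  simp only [tpow, mul_apply, of_apply, ← prod_mul_distrib]
  rw [← Fintype.piFinset_univ, prod_univ_sum]

lemma tpow_smul {D n : ℕ} (c : Fin n → ℂ) (M : Fin n → Matrix (Fin D) (Fin D) ℂ) :
    tpow (fun i => c i • M i) = (∏ i, c i) • tpow M := by
  ext x y
  simp [tpow, prod_mul_distrib]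

lemma sandwich_eq_signChar_smul {D : ℕ} (ρ Pt : ZMod 2 → ZMod 2 → Matrix (Fin D) (Fin D) ℂ)
    (hPt2 : ∀ a b : ZMod 2, Pt b a * ρ (b + 1) 0 * Pt b a = Pt b a * ρ (b + 1) 1 * Pt b a)
    (hPt3 : ∀ a b : ZMod 2,
      Pt b a * ρ (b + 1) 0 * Pt b (a + 1) = -(Pt b a * ρ (b + 1) 1 * Pt b (a + 1)))
    (β a c g : ZMod 2) :
    Pt β a * ρ (β + 1) g * Pt β c =
      signChar ((a + c) * g) • (Pt β a * ρ (β + 1) 0 * Pt β c) := by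
  obtain ⟨d, rfl⟩ : ∃ d, c = a + d := ⟨a + c, by revert a c; decide⟩
  rw [← add_assoc, CharTwo.add_self_eq_zero, zero_add]
  rcases zmodTwo_eq_zero_or_eq_one g with rfl | rfl
  · simp
  rcases zmodTwo_eq_zero_or_eq_one d with rfl | rfl
  · simp [hPt2]
  · simp [hPt3, signChar_one]

lemma tpow_sandwich_eq_signChar_smul {D n : ℕ}
    (ρ Pt : ZMod 2 → ZMod 2 → Matrix (Fin D) (Fin D) ℂ)
    (hsite : ∀ β a c g : ZMod 2, Pt β a * ρ (β + 1) g * Pt β c =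
      signChar ((a + c) * g) • (Pt β a * ρ (β + 1) 0 * Pt β c))
    (b k l g : Fin n → ZMod 2) :
    tpow (fun i => Pt (b i) (k i)) * tpow (fun i => ρ (b i + 1) (g i)) *
        tpow (fun i => Pt (b i) (l i)) =
      signChar ((k + l) ⬝ᵥ g) •
        (tpow (fun i => Pt (b i) (k i)) * tpow (fun i => ρ (b i + 1) 0) *
          tpow (fun i => Pt (b i) (l i))) := by
  simp only [tpow_mul, hsite (b _) (k _) (l _) (g _),
    tpow_smul, dotProduct, AddChar.map_sum_eq_prod, Pi.add_apply]

lemma tpow_mul_rhoOf_mul {D n : ℕ}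
    (ρ Pt : ZMod 2 → ZMod 2 → Matrix (Fin D) (Fin D) ℂ)
    (hsite : ∀ β a c g : ZMod 2, Pt β a * ρ (β + 1) g * Pt β c =
      signChar ((a + c) * g) • (Pt β a * ρ (β + 1) 0 * Pt β c))
    (b k l : Fin n → ZMod 2) (A : Finset (Fin n → ZMod 2)) :
    tpow (fun i => Pt (b i) (k i)) * rhoOf ρ b A * tpow (fun i => Pt (b i) (l i)) =
      ((#A : ℂ)⁻¹ * ∑ g ∈ A, signChar ((k + l) ⬝ᵥ g)) •
        (tpow (fun i => Pt (b i) (k i)) * tpow (fun i => ρ (b i + 1) 0) *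
          tpow (fun i => Pt (b i) (l i))) := by
  rw [rhoOf, Matrix.mul_smul, Matrix.smul_mul, mul_sum, sum_mul,
    sum_congr rfl fun g _ => tpow_sandwich_eq_signChar_smul ρ Pt hsite b k l g,
    ← sum_smul, smul_smul]

theorem stmt11_general (D n : ℕ)
    (ρ Pt : ZMod 2 → ZMod 2 → Matrix (Fin D) (Fin D) ℂ)
    (hPt2 : ∀ a b : ZMod 2,
      Pt b a * ρ (b + 1) 0 * Pt b a = Pt b a * ρ (b + 1) 1 * Pt b a)
    (hPt3 : ∀ a b : ZMod 2,
      Pt b a * ρ (b + 1) 0 * Pt b (a + 1) = -(Pt b a * ρ (b + 1) 1 * Pt b (a + 1)))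
    (b : Fin n → ZMod 2)
    (C0 : Submodule (ZMod 2) (Fin n → ZMod 2))
    (k l : Fin n → ZMod 2) :
    ((∀ g ∈ C0, (k + l) ⬝ᵥ g = 0) →
      tpow (fun i => Pt (b i) (k i)) *
          rhoOf ρ b (Finset.univ.filter (fun g => g ∈ C0)) *
          tpow (fun i => Pt (b i) (l i)) =
        tpow (fun i => Pt (b i) (k i)) *
          tpow (fun i => ρ (b i + 1) 0) *
          tpow (fun i => Pt (b i) (l i))) ∧
    (¬ (∀ g ∈ C0, (k + l) ⬝ᵥ g = 0) →
      tpow (fun i => Pt (b i) (k i)) *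
          rhoOf ρ b (Finset.univ.filter (fun g => g ∈ C0)) *
          tpow (fun i => Pt (b i) (l i)) = 0) := by
  have hcard : (#(univ.filter (· ∈ C0)) : ℂ) ≠ 0 :=
    Nat.cast_ne_zero.mpr (card_ne_zero_of_mem ((mem_filter_univ _).mpr C0.zero_mem))
  rw [tpow_mul_rhoOf_mul ρ Pt (sandwich_eq_signChar_smul ρ Pt hPt2 hPt3), sum_signChar_dotProduct]
  constructor
  · intro h
    rw [if_pos h, inv_mul_cancel₀ hcard, one_smul]
  · intro h
    rw [if_neg h, mul_zero, zero_smul]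

/-- if `k ⊕ l ∈ C₀^⊥` then
`P̃_b^k ρ_{C₀} P̃_b^l = P̃_b^k (⊗_k ρ_{b̄[k]}^0) P̃_b^l`, and otherwise
`P̃_b^k ρ_{C₀} P̃_b^l = 0`. -/
theorem stmt11 (D n : ℕ) (hD : 1 ≤ D)
    (ρ Pt : ZMod 2 → ZMod 2 → Matrix (Fin D) (Fin D) ℂ)
    (hρ : ∀ b g, (ρ b g).PosSemidef ∧ (ρ b g).trace = 1)
    (hPt1 : ∀ b : ZMod 2, Pt b 0 + Pt b 1 = 1)
    (hPt2 : ∀ a b : ZMod 2,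
      Pt b a * ρ (b + 1) 0 * Pt b a = Pt b a * ρ (b + 1) 1 * Pt b a)
    (hPt3 : ∀ a b : ZMod 2,
      Pt b a * ρ (b + 1) 0 * Pt b (a + 1) = -(Pt b a * ρ (b + 1) 1 * Pt b (a + 1)))
    (b : Fin n → ZMod 2)
    (C0 : Submodule (ZMod 2) (Fin n → ZMod 2))
    (k l : Fin n → ZMod 2) :
    ((∀ g ∈ C0, (k + l) ⬝ᵥ g = 0) →
      tpow (fun i => Pt (b i) (k i)) *
          rhoOf ρ b (Finset.univ.filter (fun g => g ∈ C0)) *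
          tpow (fun i => Pt (b i) (l i)) =
        tpow (fun i => Pt (b i) (k i)) *
          tpow (fun i => ρ (b i + 1) 0) *
          tpow (fun i => Pt (b i) (l i))) ∧
    (¬ (∀ g ∈ C0, (k + l) ⬝ᵥ g = 0) →
      tpow (fun i => Pt (b i) (k i)) *
          rhoOf ρ b (Finset.univ.filter (fun g => g ∈ C0)) *
          tpow (fun i => Pt (b i) (l i)) = 0) :=
  stmt11_general D n ρ Pt hPt2 hPt3 b C0 k l
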